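/- π₁ preserves exactness: Let (F, φ, G) be an exact sequence of pointed groupoids, i.e. F : A → B and G : B → C are pointed functors, φ is a family of morphisms φ_a : *_C → G(F(a)) natural in a with φ_{*_A} = id, and the canonical comparison F′ : A → K(G), a ↦ (F(a), φ_a⁻¹), is full and essentially surjective. Then the sequence of groups π₁(A) → π₁(B) → π₁(C), with maps π₁(F) and π₁(G), is exact: the image of π₁(F) equals the kernel of π₁(G). -/

import Mathlib

/-! A loop `b` at `*_B` with `G(b) = id` is an endomorphism of `F'(*_A) = (*_B, φ_{*_A}⁻¹)` in
`K(G)`, so fullness of `F'` lifts it to a loop at `*_A`. Conversely, naturality of `φ`, whose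
source is a constant functor, forces `G(F(a)) = id` for every loop `a` in `A`. -/

open CategoryTheory

universe w v₁ v₂ v₃ v₄ u₁ u₂ u₃ u₄

namespace Snail

variable {A : Type u₁} [Groupoid.{v₁} A] {B : Type u₂} [Groupoid.{v₂} B]

/-- The set of connected components (isomorphism classes of objects) of a groupoid. -/
def Pi0 (A : Type u₁) [Groupoid.{v₁} A] : Type u₁ :=
  Quotient (CategoryTheory.isIsomorphicSetoid A)

/-- The connected component of an object. -/
def pi0 (a : A) : Pi0 A := Quotient.mk (CategoryTheory.isIsomorphicSetoid A) a

/-- The map induced on connected components by a functor; for pointed functors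
between pointed groupoids this is the induced pointed map `π₀(F)`. -/
def pi0Map (F : A ⥤ B) : Pi0 A → Pi0 B :=
  Quotient.map F.obj fun _ _ h => Nonempty.map (fun i => F.mapIso i) h

/-- The group homomorphism `π₁(F) : Aut (*_A) →* Aut (*_B)` induced by a pointed
functor `F` (with `F.obj pA = pB`). -/
def pi1Map (F : A ⥤ B) {pA : A} {pB : B} (h : F.obj pA = pB) : Aut pA →* Aut pB :=
  (Aut.autMulEquivOfIso (eqToIso h)).toMonoidHom.comp (F.mapAut pA)

/-- The strong homotopy kernel `K(F)` of a functor `F : A ⥤ B` with respect to the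
basepoint `pB` of `B` : objects are pairs `(a, β : F a ⟶ pB)`. -/
structure HKer (F : A ⥤ B) (pB : B) : Type (max u₁ v₂) where
  pt : A
  arr : F.obj pt ⟶ pB

/-- Morphisms `(a, β) ⟶ (a', β')` in `K(F)` are morphisms `f : a ⟶ a'` of `A` with
`F.map f ≫ β' = β`. -/
instance hkerGroupoid (F : A ⥤ B) (pB : B) : Groupoid (HKer F pB) where
  Hom x y := { f : x.pt ⟶ y.pt // F.map f ≫ y.arr = x.arr }
  id x := ⟨𝟙 x.pt, by simp⟩
  comp {x y z} f g := ⟨f.1 ≫ g.1, by rw [F.map_comp, Category.assoc, g.2, f.2]⟩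
  id_comp f := Subtype.ext (Category.id_comp f.1)
  comp_id f := Subtype.ext (Category.comp_id f.1)
  assoc f g h := Subtype.ext (Category.assoc f.1 g.1 h.1)
  inv {x y} f := ⟨Groupoid.inv f.1, by
    obtain ⟨g, h⟩ := f
    dsimp only
    rw [← h, ← Category.assoc, ← F.map_comp, Groupoid.inv_comp, F.map_id, Category.id_comp]⟩
  inv_comp f := Subtype.ext (Groupoid.inv_comp f.1)
  comp_inv f := Subtype.ext (Groupoid.comp_inv f.1)

/-- The projection functor `P : K(F) ⥤ A`, `(a, β) ↦ a`, `f ↦ f`. -/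
def hkerProj (F : A ⥤ B) (pB : B) : HKer F pB ⥤ A where
  obj x := x.pt
  map f := f.1
  map_id _ := rfl
  map_comp _ _ := rfl


variable {C : Type u₃} [Groupoid.{v₃} C]

/-- The canonical comparison functor `F' : A ⥤ K(G)` associated with pointed
functors `F : A ⥤ B`, `G : B ⥤ C` and a natural family `φ_a : *_C ⟶ G (F a)` :
it sends `a` to `(F a, φ_a⁻¹)` and `f` to `F f`. -/
def exactComparison (F : A ⥤ B) (G : B ⥤ C) {pC : C}
    (φ : (Functor.const A).obj pC ⟶ F ⋙ G) : A ⥤ HKer G pC where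
  obj a := ⟨F.obj a, Groupoid.inv (φ.app a)⟩
  map {a a'} f := ⟨F.map f, by
    have nat := φ.naturality f
    simp only [Functor.comp_map, Functor.const_obj_map, Category.id_comp] at nat
    dsimp only
    simp only [Groupoid.inv_eq_inv]
    rw [IsIso.comp_inv_eq, IsIso.eq_inv_comp, ← nat]
    simp⟩
  map_id a := Subtype.ext (F.map_id a)
  map_comp f g := Subtype.ext (F.map_comp f g)

lemma map_eq_id_of_natTrans_from_const {A : Type u₁} [Category.{v₁} A]
    {C : Type u₃} [Groupoid.{v₃} C] {H : A ⥤ C} {c : C} (φ : (Functor.const A).obj c ⟶ H)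
    {a : A} (f : a ⟶ a) : H.map f = 𝟙 _ := by
  have nat : φ.app a ≫ H.map f = φ.app a ≫ 𝟙 _ := by simpa using (φ.naturality f).symm
  exact (cancel_epi _).1 nat

section Groupoid

variable {A : Type u₁} [Groupoid.{v₁} A] {B : Type u₂} [Groupoid.{v₂} B]
  {C : Type u₃} [Groupoid.{v₃} C]

lemma pi1Map_hom (F : A ⥤ B) {pA : A} {pB : B} (h : F.obj pA = pB) (a : Aut pA) :
    (pi1Map F h a).hom = eqToHom h.symm ≫ F.map a.hom ≫ eqToHom h :=
  rfl

lemma pi1Map_eq_one_iff (F : A ⥤ B) {pA : A} {pB : B} (h : F.obj pA = pB) (a : Aut pA) :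
    pi1Map F h a = 1 ↔ F.map a.hom = 𝟙 _ := by
  subst h
  rw [Aut.ext_iff, pi1Map_hom]
  simp only [eqToHom_refl, Category.id_comp, Category.comp_id]
  rfl

lemma exists_map_eq_of_map_eq_id (F : A ⥤ B) (G : B ⥤ C) {pC : C}
    (φ : (Functor.const A).obj pC ⟶ F ⋙ G) {a : A}
    (hfull : Function.Surjective fun f : a ⟶ a => (exactComparison F G φ).map f)
    (g : F.obj a ⟶ F.obj a) (hg : G.map g = 𝟙 _) : ∃ f : a ⟶ a, F.map f = g := by
  obtain ⟨f, hf⟩ := hfull ⟨g, show G.map g ≫ _ = _ by rw [hg]; exact Category.id_comp _⟩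
  exact ⟨f, congrArg Subtype.val hf⟩

end Groupoid

/-- **`π₁` preserves exactness.** If `(F, φ, G)` is an exact sequence of pointed
groupoids (the comparison `F' : A ⥤ K(G)` is full and essentially surjective), then
`π₁(A) → π₁(B) → π₁(C)` is exact: the image of `π₁(F)` is the kernel of `π₁(G)`. -/
theorem pi1_preserves_exactness {A : Type u₁} [Groupoid.{v₁} A] {B : Type u₂}
    [Groupoid.{v₂} B] {C : Type u₃} [Groupoid.{v₃} C]
    (F : A ⥤ B) (G : B ⥤ C) (pA : A) (pB : B) (pC : C)
    (hF : F.obj pA = pB) (hG : G.obj pB = pC)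
    (φ : (Functor.const A).obj pC ⟶ F ⋙ G)
    (hfull : ∀ x y : A,
      Function.Surjective fun f : x ⟶ y => (exactComparison F G φ).map f) :
    ∀ b : Aut pB, (∃ a : Aut pA, pi1Map F hF a = b) ↔ pi1Map G hG b = 1 := by
  intro b
  subst hF hG
  rw [pi1Map_eq_one_iff]
  constructor
  · rintro ⟨a, rfl⟩
    simpa [pi1Map_hom] using map_eq_id_of_natTrans_from_const φ a.hom
  · intro hb
    obtain ⟨f, hf⟩ := exists_map_eq_of_map_eq_id F G φ (hfull pA pA) b.hom hb
    refine ⟨asIso f, Aut.ext ((pi1Map_hom F rfl (asIso f)).trans ?_)⟩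
    simp [hf]

end Snail
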